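/- Suppose n and k are positive integers with e^8 n^{1/3} ≤ k ≤ n^{1/3} e^n. Then the minimax risk for the class F_k satisfies R_n(F_k) ≥ (1/32) · ( log(k/n^{1/3}) / n )^{1/3}, where log denotes the natural logarithm. -/

import Mathlib

open Finset

/-- The class `F_k` of non-increasing probability densities on `{1, …, k}`,
represented as functions `ℕ → ℝ` vanishing outside of `{1, …, k}`. -/
def Fk (k : ℕ) : Set (ℕ → ℝ) :=
  {f | (∀ x, 0 ≤ f x) ∧ (∀ x, x ∉ Finset.Icc 1 k → f x = 0) ∧
    (∑ x ∈ Finset.Icc 1 k, f x = 1) ∧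
    (∀ x, 1 ≤ x → x + 1 ≤ k → f (x + 1) ≤ f x)}

/-- Total variation distance between two functions on `{1, …, k}`:
`TV(g, f) = (1/2) ∑_{x=1}^{k} |g x - f x|`. -/
noncomputable def TVk (k : ℕ) (g f : ℕ → ℝ) : ℝ :=
  (∑ x ∈ Finset.Icc 1 k, |g x - f x|) / 2

/-- The risk of the density estimate `φ` (a map taking the `n` sample points to a
function on `{1, …, k}`) over the class `F`: the worst-case, over `f ∈ F`, expected
total variation distance between the estimate and `f`, the expectation being over
`n` i.i.d. samples drawn from the density `f`. -/
noncomputable def risk (n k : ℕ) (φ : (Fin n → ℕ) → ℕ → ℝ) (F : Set (ℕ → ℝ)) : ℝ :=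
  ⨆ f ∈ F, ∑ x ∈ Fintype.piFinset (fun _ : Fin n => Finset.Icc 1 k),
    (∏ i, f (x i)) * TVk k (φ x) f

/-- The minimax risk `R_n(F)`: the infimum of the risk over all density estimates. -/
noncomputable def minimaxRisk (n k : ℕ) (F : Set (ℕ → ℝ)) : ℝ :=
  ⨅ φ : (Fin n → ℕ) → ℕ → ℝ, risk n k φ F

/-!
Assouad's lemma over a hypercube of non-increasing densities. After a point mass at `1`, the
support is cut into `m ≈ 6 n ε²` consecutive blocks: block `j` has two halves of length
`⌈r ^ j⌉` and flat height `q / (4 r ^ j)`, where `r = (1 + ε) / (1 - ε)` and `q ≈ 1 / m`, so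
that each block carries mass `≈ q / 2`. A vertex `τ` of the hypercube tilts block `j`, when
`τ j` holds, to `(1 + ε)` resp. `(1 - ε)` times its height on its two halves; since `r` is the
ratio of consecutive heights, the tilted densities stay non-increasing, and they fit into
`{1, …, k}` once `k ≥ n^{1/3} e^L`, where `L = 27 n ε³`. Flipping one coordinate moves the
density by `≈ q ε` in total variation, but its Hellinger affinity only by `O(q ε²) = O(1 / n)`,
so that `n` samples cannot tell the two apart: their product measures overlap by at least `3 / 4`.
Assouad's lemma then bounds the risk of any estimate below by `≈ m q ε ≈ ε = (L / n)^{1/3} / 3`.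
-/

open Real

section Affinity

variable {α : Type*}

theorem sq_one_sub_sum_min_le (s : Finset α) {p q : α → ℝ}
    (hp : ∀ x ∈ s, 0 ≤ p x) (hq : ∀ x ∈ s, 0 ≤ q x)
    (hp1 : ∑ x ∈ s, p x = 1) (hq1 : ∑ x ∈ s, q x = 1) :
    (1 - ∑ x ∈ s, min (p x) (q x)) ^ 2 ≤ 1 - (∑ x ∈ s, √(p x * q x)) ^ 2 := by
  set B := ∑ x ∈ s, √(p x * q x)
  have hmin : 1 - ∑ x ∈ s, min (p x) (q x) = (∑ x ∈ s, |p x - q x|) / 2 := by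
    have h : ∀ x ∈ s, min (p x) (q x) = (p x + q x - |p x - q x|) / 2 := fun x _ => by
      linarith [min_add_max (p x) (q x), max_sub_min_eq_abs' (p x) (q x)]
    rw [sum_congr rfl h, ← sum_div, sum_sub_distrib, sum_add_distrib, hp1, hq1]
    ring
  have hsq : ∀ x ∈ s, √(p x * q x) = √(p x) * √(q x) := fun x hx => sqrt_mul (hp x hx) _
  have hminus : ∀ x ∈ s, (√(p x) - √(q x)) ^ 2 = p x + q x - 2 * √(p x * q x) := fun x hx => by
    rw [hsq x hx]; nlinarith [sq_sqrt (hp x hx), sq_sqrt (hq x hx)]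
  have hplus : ∀ x ∈ s, (√(p x) + √(q x)) ^ 2 = p x + q x + 2 * √(p x * q x) := fun x hx => by
    rw [hsq x hx]; nlinarith [sq_sqrt (hp x hx), sq_sqrt (hq x hx)]
  -- Cauchy–Schwarz for `|p - q| = |√p - √q| (√p + √q)`
  have hCS : (∑ x ∈ s, |p x - q x|) ^ 2 ≤ (2 - 2 * B) * (2 + 2 * B) := by
    have h := sum_sq_le_sum_mul_sum_of_sq_le_mul s (r := fun x => |p x - q x|)
      (f := fun x => (√(p x) - √(q x)) ^ 2) (g := fun x => (√(p x) + √(q x)) ^ 2)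
      (fun _ _ => sq_nonneg _) (fun _ _ => sq_nonneg _) (fun x hx => by
        rw [sq_abs, ← mul_pow]
        nlinarith [sq_sqrt (hp x hx), sq_sqrt (hq x hx)])
    simpa only [sum_congr rfl hminus, sum_congr rfl hplus, sum_sub_distrib, sum_add_distrib,
      ← mul_sum, hp1, hq1, one_add_one_eq_two] using h
  rw [hmin]
  nlinarith

theorem sum_piFinset_sqrt_prod_mul_prod (n : ℕ) (s : Finset α) {f g : α → ℝ}
    (hf : ∀ y, 0 ≤ f y) (hg : ∀ y, 0 ≤ g y) :
    ∑ x ∈ Fintype.piFinset (fun _ : Fin n => s), √((∏ i, f (x i)) * ∏ i, g (x i)) =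
      (∑ y ∈ s, √(f y * g y)) ^ n := by
  rw [sum_pow']
  refine sum_congr rfl fun x _ => ?_
  rw [← prod_mul_distrib, sqrt_prod _ fun i _ => mul_nonneg (hf _) (hg _)]

theorem three_quarters_le_sum_min_piFinset (n : ℕ) (s : Finset α) {f g : α → ℝ}
    (hf : ∀ y, 0 ≤ f y) (hg : ∀ y, 0 ≤ g y)
    (hf1 : ∑ y ∈ s, f y = 1) (hg1 : ∑ y ∈ s, g y = 1)
    (haff : 1 - 1 / (32 * n) ≤ ∑ y ∈ s, √(f y * g y)) :
    3 / 4 ≤ ∑ x ∈ Fintype.piFinset (fun _ : Fin n => s),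
      min (∏ i, f (x i)) (∏ i, g (x i)) := by
  set a := ∑ y ∈ s, √(f y * g y)
  have hbern : 31 / 32 ≤ a ^ n := by
    have hna : (n : ℝ) * (a - 1) ≥ -(1 / 32) := by
      rcases n.eq_zero_or_pos with rfl | hn
      · simp
      · have : (n : ℝ) * (1 / (32 * n)) = 1 / 32 := by field_simp
        nlinarith [(Nat.cast_pos.mpr hn : (0 : ℝ) < n)]
    have h := one_add_le_pow_of_two_add_nonneg (a := a - 1) (by
      have : 0 ≤ a := sum_nonneg fun y _ => sqrt_nonneg _
      linarith) n
    rw [add_sub_cancel] at h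
    linarith
  have h := sq_one_sub_sum_min_le (Fintype.piFinset fun _ : Fin n => s)
    (p := fun x => ∏ i, f (x i)) (q := fun x => ∏ i, g (x i))
    (fun x _ => prod_nonneg fun i _ => hf _) (fun x _ => prod_nonneg fun i _ => hg _)
    (by rw [← sum_pow', hf1, one_pow]) (by rw [← sum_pow', hg1, one_pow])
  rw [sum_piFinset_sqrt_prod_mul_prod n s hf hg] at h
  nlinarith

end Affinity

section Assouad

variable {α : Type*} {m : ℕ}

def flipAt (i : Fin m) : Equiv.Perm (Fin m → Bool) :=
  Function.Involutive.toPerm (fun τ => Function.update τ i (!τ i)) fun τ => by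
    simp

theorem flipAt_apply (i : Fin m) (τ : Fin m → Bool) :
    flipAt i τ = Function.update τ i (!τ i) := rfl

theorem add_flipAt {M : Type*} [AddCommMonoid M] (i : Fin m) (G : (Fin m → Bool) → M)
    (τ : Fin m → Bool) :
    G τ + G (flipAt i τ) = G (Function.update τ i false) + G (Function.update τ i true) := by
  have hτ : Function.update τ i (τ i) = τ := Function.update_eq_self i τ
  cases h : τ i <;> rw [h] at hτ
  · rw [flipAt_apply, h, Bool.not_false, hτ]
  · rw [flipAt_apply, h, Bool.not_true, hτ, add_comm]

theorem two_pow_mul_le_two_mul_sum_sum_mul (s : Finset α) (P : (Fin m → Bool) → α → ℝ)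
    (e : Fin m → Bool → α → ℝ) {β δ : ℝ} (hδ : 0 ≤ δ)
    (hP : ∀ τ x, 0 ≤ P τ x) (he : ∀ i b x, 0 ≤ e i b x)
    (hsep : ∀ i x, δ ≤ e i false x + e i true x)
    (haff : ∀ τ i, β ≤ ∑ x ∈ s, min (P (Function.update τ i false) x)
      (P (Function.update τ i true) x))
    (i : Fin m) : 2 ^ m * (β * δ) ≤ 2 * ∑ τ, ∑ x ∈ s, P τ x * e i (τ i) x := by
  set G : (Fin m → Bool) → ℝ := fun τ => ∑ x ∈ s, P τ x * e i (τ i) x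
  have hpair : 2 * ∑ τ, G τ =
      ∑ τ, (G (Function.update τ i false) + G (Function.update τ i true)) := by
    rw [two_mul]
    nth_rewrite 2 [← Equiv.sum_comp (flipAt i) G]
    rw [← sum_add_distrib]
    exact sum_congr rfl fun τ _ => add_flipAt i G τ
  have hvertex (τ) : β * δ ≤ G (Function.update τ i false) + G (Function.update τ i true) := by
    calc β * δ ≤ (∑ x ∈ s, min (P (Function.update τ i false) x)
          (P (Function.update τ i true) x)) * δ := mul_le_mul_of_nonneg_right (haff τ i) hδ
      _ = ∑ x ∈ s, min (P (Function.update τ i false) x) (P (Function.update τ i true) x) * δ :=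
        sum_mul _ _ _
      _ ≤ ∑ x ∈ s, (P (Function.update τ i false) x * e i false x +
          P (Function.update τ i true) x * e i true x) := by
        gcongr with x
        have := hsep i x
        nlinarith [min_le_left (P (Function.update τ i false) x) (P (Function.update τ i true) x),
          min_le_right (P (Function.update τ i false) x) (P (Function.update τ i true) x),
          le_min (hP (Function.update τ i false) x) (hP (Function.update τ i true) x),
          he i false x, he i true x]
      _ = G (Function.update τ i false) + G (Function.update τ i true) := by
        simp only [G, Function.update_self, sum_add_distrib]
  calc 2 ^ m * (β * δ) = ∑ _τ : Fin m → Bool, β * δ := by simp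
    _ ≤ _ := sum_le_sum fun τ _ => hvertex τ
    _ = _ := hpair.symm

/-- **Assouad's lemma.** -/
theorem exists_le_sum_mul_loss (s : Finset α) (P loss : (Fin m → Bool) → α → ℝ)
    (e : Fin m → Bool → α → ℝ) {β δ : ℝ} (hδ : 0 ≤ δ)
    (hP : ∀ τ x, 0 ≤ P τ x) (he : ∀ i b x, 0 ≤ e i b x)
    (hloss : ∀ τ x, ∑ i, e i (τ i) x ≤ loss τ x)
    (hsep : ∀ i x, δ ≤ e i false x + e i true x)
    (haff : ∀ τ i, β ≤ ∑ x ∈ s, min (P (Function.update τ i false) x)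
      (P (Function.update τ i true) x)) :
    ∃ τ, m * (β * δ) / 2 ≤ ∑ x ∈ s, P τ x * loss τ x := by
  have htotal : ∑ _τ : Fin m → Bool, m * (β * δ) / 2 ≤
      ∑ τ, ∑ x ∈ s, P τ x * loss τ x := calc
    _ = (∑ _i : Fin m, 2 ^ m * (β * δ)) / 2 := by
      simp only [sum_const, card_univ, Fintype.card_pi, Fintype.card_bool, prod_const,
        Fintype.card_fin, nsmul_eq_mul, Nat.cast_pow, Nat.cast_ofNat]
      ring
    _ ≤ (∑ i, 2 * ∑ τ, ∑ x ∈ s, P τ x * e i (τ i) x) / 2 :=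
      div_le_div_of_nonneg_right (sum_le_sum fun i _ =>
        two_pow_mul_le_two_mul_sum_sum_mul s P e hδ hP he hsep haff i) zero_le_two
    _ = ∑ τ, ∑ x ∈ s, P τ x * ∑ i, e i (τ i) x := by
      rw [← mul_sum, mul_div_cancel_left₀ _ two_ne_zero, sum_comm]
      refine sum_congr rfl fun τ _ => ?_
      rw [sum_comm]
      simp only [mul_sum]
    _ ≤ _ := sum_le_sum fun τ _ => sum_le_sum fun x _ =>
      mul_le_mul_of_nonneg_left (hloss τ x) (hP τ x)
  obtain ⟨τ, -, hτ⟩ := exists_le_of_sum_le univ_nonempty htotal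
  exact ⟨τ, hτ⟩

end Assouad

namespace Staircase

variable (ε q : ℝ)

noncomputable def ratio : ℝ := (1 + ε) / (1 - ε)

noncomputable def halfLen (j : ℕ) : ℕ := ⌈ratio ε ^ j⌉₊

noncomputable def blockStart : ℕ → ℕ
  | 0 => 2
  | j + 1 => blockStart j + 2 * halfLen ε j

noncomputable def block (j : ℕ) : Finset ℕ := Ico (blockStart ε j) (blockStart ε (j + 1))

noncomputable def height (j : ℕ) : ℝ := q / 4 / ratio ε ^ j

noncomputable def blockDensity (j : ℕ) (b : Bool) (y : ℕ) : ℝ :=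
  if b then
    if y < blockStart ε j + halfLen ε j then height ε q j * (1 + ε) else height ε q j * (1 - ε)
  else height ε q j

noncomputable def headMass (m : ℕ) : ℝ :=
  1 - ∑ j ∈ range m, 2 * height ε q j * halfLen ε j

noncomputable def density {m : ℕ} (τ : Fin m → Bool) (y : ℕ) : ℝ :=
  (if y = 1 then headMass ε q m else 0) +
    ∑ j : Fin m, if y ∈ block ε j then blockDensity ε q j (τ j) y else 0

noncomputable def blockTV (j : ℕ) (b : Bool) (g : ℕ → ℝ) : ℝ :=
  (∑ y ∈ block ε j, |g y - blockDensity ε q j b y|) / 2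

variable {ε q}

section Blocks

theorem blockStart_succ (j : ℕ) : blockStart ε (j + 1) = blockStart ε j + 2 * halfLen ε j := rfl

theorem blockStart_mono : Monotone (blockStart ε) :=
  monotone_nat_of_le_succ fun j => by rw [blockStart_succ]; omega

theorem blockStart_eq (j : ℕ) : blockStart ε j = 2 + 2 * ∑ i ∈ range j, halfLen ε i := by
  induction j with
  | zero => rfl
  | succ j ih => rw [blockStart_succ, ih, sum_range_succ]; ring

theorem two_le_blockStart (j : ℕ) : 2 ≤ blockStart ε j := by
  rw [blockStart_eq]; omega

theorem one_le_ratio (hε : 0 ≤ ε) (hε1 : ε < 1) : 1 ≤ ratio ε := by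
  rw [ratio, le_div_iff₀ (by linarith)]; linarith

theorem two_le_of_mem_block {j y : ℕ} (hy : y ∈ block ε j) : 2 ≤ y :=
  (two_le_blockStart j).trans (mem_Ico.mp hy).1

theorem lt_of_mem_block {i j : ℕ} {y : ℕ} (hy : y ∈ block ε i) (hj : i < j) :
    y < blockStart ε j :=
  (mem_Ico.mp hy).2.trans_le (blockStart_mono hj)

theorem eq_of_mem_block {i j y : ℕ} (hi : y ∈ block ε i) (hj : y ∈ block ε j) : i = j := by
  by_contra hij
  rcases Nat.lt_or_gt_of_ne hij with h | h
  · exact (lt_of_mem_block hi h).not_ge (mem_Ico.mp hj).1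
  · exact (lt_of_mem_block hj h).not_ge (mem_Ico.mp hi).1

theorem exists_mem_block {m y : ℕ} (h2 : 2 ≤ y) (hy : y < blockStart ε m) :
    ∃ j < m, y ∈ block ε j := by
  induction m with
  | zero => exact absurd hy (not_lt.mpr h2)
  | succ m ih =>
    by_cases hm : y < blockStart ε m
    · obtain ⟨j, hj, hyj⟩ := ih hm
      exact ⟨j, by omega, hyj⟩
    · exact ⟨m, by omega, mem_Ico.mpr ⟨by omega, hy⟩⟩

theorem block_subset_Icc {m k : ℕ} (hsupp : blockStart ε m ≤ k + 1) {j : ℕ} (hj : j < m) :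
    block ε j ⊆ Icc 1 k := fun y hy => by
  have := two_le_of_mem_block hy
  have := lt_of_mem_block hy hj
  rw [mem_Icc]; omega

theorem card_block (j : ℕ) : (block ε j).card = 2 * halfLen ε j := by
  rw [block, blockStart_succ, Nat.card_Ico, Nat.add_sub_cancel_left]

theorem sum_block_ite (j : ℕ) (a c : ℝ) :
    ∑ y ∈ block ε j, (if y < blockStart ε j + halfLen ε j then a else c) =
      halfLen ε j * (a + c) := by
  have hmid := Nat.le_add_right (blockStart ε j) (halfLen ε j)
  rw [block, blockStart_succ, ← sum_Ico_consecutive _ hmid (by omega),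
    sum_congr rfl fun y hy => if_pos (mem_Ico.mp hy).2,
    sum_congr rfl fun y hy => if_neg (mem_Ico.mp hy).1.not_gt]
  simp only [sum_const, Nat.card_Ico, nsmul_eq_mul]
  rw [show blockStart ε j + 2 * halfLen ε j - (blockStart ε j + halfLen ε j) = halfLen ε j by
    omega, Nat.add_sub_cancel_left]
  ring

end Blocks

section Heights

theorem ratio_pos (hε : 0 ≤ ε) (hε1 : ε < 1) : 0 < ratio ε :=
  zero_lt_one.trans_le (one_le_ratio hε hε1)

theorem height_nonneg (hε : 0 ≤ ε) (hε1 : ε < 1) (hq : 0 ≤ q) (j : ℕ) : 0 ≤ height ε q j :=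
  div_nonneg (by positivity) (pow_pos (ratio_pos hε hε1) j).le

theorem height_antitone (hε : 0 ≤ ε) (hε1 : ε < 1) (hq : 0 ≤ q) : Antitone (height ε q) :=
  fun _ _ hij => div_le_div_of_nonneg_left (by positivity)
    (pow_pos (ratio_pos hε hε1) _) (pow_le_pow_right₀ (one_le_ratio hε hε1) hij)

-- consecutive blocks meet with no increase: this is why the heights decay by `ratio ε`
theorem height_succ_mul (hε : 0 ≤ ε) (hε1 : ε < 1) (j : ℕ) :
    height ε q (j + 1) * (1 + ε) = height ε q j * (1 - ε) := by
  have h1 : (1 : ℝ) - ε ≠ 0 := by linarith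
  have h2 : (1 : ℝ) + ε ≠ 0 := by linarith
  have h3 : ratio ε ^ j ≠ 0 := (pow_pos (ratio_pos hε hε1) j).ne'
  simp only [height, ratio, pow_succ]
  field_simp

theorem quarter_le_height_mul_halfLen (hε : 0 ≤ ε) (hε1 : ε < 1) (hq : 0 ≤ q) (j : ℕ) :
    q / 4 ≤ height ε q j * halfLen ε j := by
  have hr := pow_pos (ratio_pos hε hε1) j
  rw [height, div_mul_eq_mul_div, le_div_iff₀ hr]
  exact mul_le_mul_of_nonneg_left (Nat.le_ceil _) (by positivity)

theorem height_mul_halfLen_le (hε : 0 ≤ ε) (hε1 : ε < 1) (hq : 0 ≤ q) (j : ℕ) :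
    height ε q j * halfLen ε j ≤ q / 4 * (1 + (ratio ε)⁻¹ ^ j) := by
  have hr := pow_pos (ratio_pos hε hε1) j
  have hs : (halfLen ε j : ℝ) ≤ ratio ε ^ j + 1 := (Nat.ceil_lt_add_one hr.le).le
  rw [height, inv_pow, div_mul_eq_mul_div, div_le_iff₀ hr, mul_assoc, add_mul,
    inv_mul_cancel₀ hr.ne', one_mul]
  exact mul_le_mul_of_nonneg_left hs (by positivity)

theorem height_mul_halfLen_le_half (hε : 0 ≤ ε) (hε1 : ε < 1) (hq : 0 ≤ q) (j : ℕ) :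
    height ε q j * halfLen ε j ≤ q / 2 := by
  have : (ratio ε)⁻¹ ^ j ≤ 1 :=
    pow_le_one₀ (inv_nonneg.mpr (ratio_pos hε hε1).le) (inv_le_one_of_one_le₀ (one_le_ratio hε hε1))
  nlinarith [height_mul_halfLen_le hε hε1 hq j]

theorem height_mul_one_sub_le_blockDensity (hε : 0 ≤ ε) (hε1 : ε < 1) (hq : 0 ≤ q)
    (j : ℕ) (b : Bool) (y : ℕ) : height ε q j * (1 - ε) ≤ blockDensity ε q j b y := by
  have := height_nonneg hε hε1 hq j
  unfold blockDensity
  split_ifs <;> nlinarith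

theorem blockDensity_le (hε : 0 ≤ ε) (hε1 : ε < 1) (hq : 0 ≤ q) (j : ℕ) (b : Bool) (y : ℕ) :
    blockDensity ε q j b y ≤ height ε q j * (1 + ε) := by
  have := height_nonneg hε hε1 hq j
  unfold blockDensity
  split_ifs <;> nlinarith

theorem blockDensity_nonneg (hε : 0 ≤ ε) (hε1 : ε < 1) (hq : 0 ≤ q) (j : ℕ) (b : Bool)
    (y : ℕ) : 0 ≤ blockDensity ε q j b y :=
  (mul_nonneg (height_nonneg hε hε1 hq j) (by linarith)).trans
    (height_mul_one_sub_le_blockDensity hε hε1 hq j b y)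

theorem blockDensity_succ_le (hε : 0 ≤ ε) (hε1 : ε < 1) (hq : 0 ≤ q) (j : ℕ) (b : Bool)
    (y : ℕ) : blockDensity ε q j b (y + 1) ≤ blockDensity ε q j b y := by
  have := height_nonneg hε hε1 hq j
  unfold blockDensity
  split_ifs <;> first | omega | nlinarith

theorem abs_blockDensity_false_sub_true (hε : 0 ≤ ε) (hε1 : ε < 1) (hq : 0 ≤ q) (j y : ℕ) :
    |blockDensity ε q j false y - blockDensity ε q j true y| = height ε q j * ε := by
  have := mul_nonneg (height_nonneg hε hε1 hq j) hε
  simp only [blockDensity, Bool.false_eq_true, if_false, if_true]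
  split_ifs
  · rw [abs_sub_comm]; convert abs_of_nonneg this using 2; ring
  · convert abs_of_nonneg this using 2; ring

theorem sqrt_blockDensity_false_mul_true (hε : 0 ≤ ε) (hε1 : ε < 1) (hq : 0 ≤ q) (j y : ℕ) :
    √(blockDensity ε q j false y * blockDensity ε q j true y) =
      if y < blockStart ε j + halfLen ε j then height ε q j * √(1 + ε)
      else height ε q j * √(1 - ε) := by
  have hv := height_nonneg hε hε1 hq j
  simp only [blockDensity, Bool.false_eq_true, if_false, if_true]
  split_ifs <;> rw [← mul_assoc, sqrt_mul (mul_self_nonneg _), sqrt_mul_self hv]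

theorem sum_blockDensity (j : ℕ) (b : Bool) :
    ∑ y ∈ block ε j, blockDensity ε q j b y = 2 * height ε q j * halfLen ε j := by
  cases b
  · simp only [blockDensity, Bool.false_eq_true, if_false, sum_const, card_block, nsmul_eq_mul]
    push_cast; ring
  · simp only [blockDensity, if_true]
    rw [sum_block_ite]; ring

end Heights

theorem blockTV_nonneg (j : ℕ) (b : Bool) (g : ℕ → ℝ) : 0 ≤ blockTV ε q j b g :=
  div_nonneg (sum_nonneg fun _ _ => abs_nonneg _) zero_le_two

theorem height_mul_halfLen_mul_le_blockTV_add (hε : 0 ≤ ε) (hε1 : ε < 1) (hq : 0 ≤ q)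
    (j : ℕ) (g : ℕ → ℝ) :
    height ε q j * halfLen ε j * ε ≤ blockTV ε q j false g + blockTV ε q j true g := by
  have htri : ∑ y ∈ block ε j, |blockDensity ε q j false y - blockDensity ε q j true y| ≤
      ∑ y ∈ block ε j, (|g y - blockDensity ε q j false y| + |g y - blockDensity ε q j true y|) :=
    sum_le_sum fun y _ => (abs_sub_le _ (g y) _).trans_eq
      (by rw [abs_sub_comm (blockDensity ε q j false y)])
  rw [sum_congr rfl fun y _ => abs_blockDensity_false_sub_true hε hε1 hq j y, sum_const,
    card_block, nsmul_eq_mul, sum_add_distrib] at htri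
  simp only [blockTV]
  push_cast at htri
  linarith

section Density

variable {m : ℕ}

theorem density_one (τ : Fin m → Bool) : density ε q τ 1 = headMass ε q m := by
  rw [density, if_pos rfl, sum_eq_zero fun j _ => if_neg fun h => by
    have := two_le_of_mem_block h; omega, add_zero]

theorem density_of_mem_block (τ : Fin m → Bool) (j : Fin m) {y : ℕ} (hy : y ∈ block ε j) :
    density ε q τ y = blockDensity ε q j (τ j) y := by
  have hy1 : y ≠ 1 := by have := two_le_of_mem_block hy; omega
  rw [density, if_neg hy1, zero_add, sum_eq_single j (fun i _ hij => if_neg fun hi =>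
    hij (Fin.ext (eq_of_mem_block hi hy))) (by simp), if_pos hy]

theorem density_eq_zero (τ : Fin m → Bool) {y : ℕ} (hy1 : y ≠ 1)
    (hy : ∀ j : Fin m, y ∉ block ε j) : density ε q τ y = 0 := by
  rw [density, if_neg hy1, zero_add]
  exact sum_eq_zero fun j _ => if_neg (hy j)

theorem density_of_blockStart_le (τ : Fin m → Bool) {y : ℕ} (hy : blockStart ε m ≤ y) :
    density ε q τ y = 0 :=
  density_eq_zero τ (by have := two_le_blockStart (ε := ε) m; omega)
    fun j hj => (lt_of_mem_block hj j.2).not_ge hy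

theorem density_update_of_notMem_block (τ : Fin m → Bool) (i : Fin m) (b : Bool) {y : ℕ}
    (hy : y ∉ block ε i) : density ε q (Function.update τ i b) y = density ε q τ y := by
  unfold density
  congr 1
  refine sum_congr rfl fun j _ => ?_
  by_cases hj : j = i
  · subst hj; rw [if_neg hy, if_neg hy]
  · rw [Function.update_of_ne hj]

theorem headMass_nonneg (hε : 0 ≤ ε) (hε1 : ε < 1) (hq : 0 ≤ q)
    (hhead : height ε q 0 * (1 + ε) ≤ headMass ε q m) : 0 ≤ headMass ε q m :=
  (mul_nonneg (height_nonneg hε hε1 hq 0) (by linarith)).trans hhead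

theorem density_nonneg (hε : 0 ≤ ε) (hε1 : ε < 1) (hq : 0 ≤ q) (hhead : 0 ≤ headMass ε q m)
    (τ : Fin m → Bool) (y : ℕ) : 0 ≤ density ε q τ y := by
  refine add_nonneg (by split_ifs <;> simp [hhead]) (sum_nonneg fun j _ => ?_)
  split_ifs
  · exact blockDensity_nonneg hε hε1 hq _ _ _
  · rfl

theorem density_le_of_blockStart_le (hε : 0 ≤ ε) (hε1 : ε < 1) (hq : 0 ≤ q)
    (τ : Fin m → Bool) {j y : ℕ} (hy : blockStart ε j ≤ y) :
    density ε q τ y ≤ height ε q j * (1 + ε) := by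
  by_cases h : ∃ i : Fin m, y ∈ block ε i
  · obtain ⟨i, hi⟩ := h
    have hji : j ≤ i := by
      by_contra hij
      exact (lt_of_mem_block hi (not_le.mp hij)).not_ge hy
    rw [density_of_mem_block τ i hi]
    exact (blockDensity_le hε hε1 hq _ _ _).trans
      (mul_le_mul_of_nonneg_right (height_antitone hε hε1 hq hji) (by linarith))
  · push Not at h
    rw [density_eq_zero τ (by have := two_le_blockStart (ε := ε) j; omega) h]
    exact mul_nonneg (height_nonneg hε hε1 hq j) (by linarith)

theorem density_succ_le (hε : 0 ≤ ε) (hε1 : ε < 1) (hq : 0 ≤ q)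
    (hhead : height ε q 0 * (1 + ε) ≤ headMass ε q m) (τ : Fin m → Bool) {x : ℕ}
    (hx : 1 ≤ x) : density ε q τ (x + 1) ≤ density ε q τ x := by
  rcases hx.eq_or_lt with rfl | hx2
  · rw [density_one]
    exact (density_le_of_blockStart_le hε hε1 hq τ (j := 0) le_rfl).trans hhead
  by_cases hxm : x < blockStart ε m
  · obtain ⟨j, hj, hxj⟩ := exists_mem_block hx2 hxm
    rw [density_of_mem_block τ ⟨j, hj⟩ hxj]
    by_cases hx1 : x + 1 ∈ block ε j
    · rw [density_of_mem_block τ ⟨j, hj⟩ hx1]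
      exact blockDensity_succ_le hε hε1 hq _ _ _
    · have hnext : blockStart ε (j + 1) ≤ x + 1 := by
        have := mem_Ico.mp hxj
        rw [block, mem_Ico] at hx1
        omega
      calc density ε q τ (x + 1) ≤ height ε q (j + 1) * (1 + ε) :=
            density_le_of_blockStart_le hε hε1 hq τ hnext
        _ = height ε q j * (1 - ε) := height_succ_mul hε hε1 j
        _ ≤ _ := height_mul_one_sub_le_blockDensity hε hε1 hq _ _ _
  · rw [density_of_blockStart_le τ (by omega)]
    exact density_nonneg hε hε1 hq (headMass_nonneg hε hε1 hq hhead) τ x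

variable {k : ℕ}

theorem sum_density (hsupp : blockStart ε m ≤ k + 1) (τ : Fin m → Bool) :
    ∑ y ∈ Icc 1 k, density ε q τ y = 1 := by
  have hk : 1 ∈ Icc 1 k := by
    have := two_le_blockStart (ε := ε) m
    rw [mem_Icc]; omega
  have hblock (j : Fin m) :
      ∑ y ∈ Icc 1 k, (if y ∈ block ε j then blockDensity ε q j (τ j) y else 0) =
        2 * height ε q j * halfLen ε j := by
    rw [sum_ite_mem, inter_eq_right.mpr (block_subset_Icc hsupp j.2), sum_blockDensity]
  simp only [density, sum_add_distrib, sum_ite_eq', if_pos hk]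
  rw [sum_comm, sum_congr rfl fun j _ => hblock j,
    Fin.sum_univ_eq_sum_range (fun j => 2 * height ε q j * halfLen ε j), headMass]
  ring

theorem density_mem_Fk (hε : 0 ≤ ε) (hε1 : ε < 1) (hq : 0 ≤ q)
    (hhead : height ε q 0 * (1 + ε) ≤ headMass ε q m) (hsupp : blockStart ε m ≤ k + 1)
    (τ : Fin m → Bool) : density ε q τ ∈ Fk k := by
  refine ⟨density_nonneg hε hε1 hq (headMass_nonneg hε hε1 hq hhead) τ, fun x hx => ?_,
    sum_density hsupp τ, fun x hx _ => density_succ_le hε hε1 hq hhead τ hx⟩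
  rw [mem_Icc, not_and_or, not_le, not_le] at hx
  rcases hx with hx | hx
  · exact density_eq_zero τ (by omega) fun j hj => by have := two_le_of_mem_block hj; omega
  · exact density_of_blockStart_le τ (by omega)

theorem sum_blockTV_le_TVk (hsupp : blockStart ε m ≤ k + 1) (τ : Fin m → Bool) (g : ℕ → ℝ) :
    ∑ j : Fin m, blockTV ε q j (τ j) g ≤ TVk k g (density ε q τ) := by
  simp only [blockTV, TVk, ← sum_div]
  refine div_le_div_of_nonneg_right ?_ zero_le_two
  have hdisj : ((univ : Finset (Fin m)) : Set (Fin m)).PairwiseDisjoint (fun j => block ε j) :=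
    fun i _ j _ hij => disjoint_left.mpr fun y hi hj => hij (Fin.ext (eq_of_mem_block hi hj))
  calc ∑ j : Fin m, ∑ y ∈ block ε j, |g y - blockDensity ε q j (τ j) y|
      = ∑ j : Fin m, ∑ y ∈ block ε j, |g y - density ε q τ y| :=
        sum_congr rfl fun j _ => sum_congr rfl fun y hy => by rw [density_of_mem_block τ j hy]
    _ = ∑ y ∈ univ.biUnion (fun j : Fin m => block ε j), |g y - density ε q τ y| :=
        (sum_biUnion hdisj).symm
    _ ≤ ∑ y ∈ Icc 1 k, |g y - density ε q τ y| :=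
        sum_le_sum_of_subset_of_nonneg (biUnion_subset.mpr fun j _ => block_subset_Icc hsupp j.2)
          fun _ _ _ => abs_nonneg _

theorem sum_sqrt_density_update_mul (hε : 0 ≤ ε) (hε1 : ε < 1) (hq : 0 ≤ q)
    (hhead : 0 ≤ headMass ε q m) (hsupp : blockStart ε m ≤ k + 1) (τ : Fin m → Bool)
    (i : Fin m) :
    ∑ y ∈ Icc 1 k, √(density ε q (Function.update τ i false) y *
        density ε q (Function.update τ i true) y) =
      1 - height ε q i * halfLen ε i * (2 - √(1 + ε) - √(1 - ε)) := by
  set f₀ := density ε q (Function.update τ i false)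
  set f₁ := density ε q (Function.update τ i true)
  have hout : ∑ y ∈ block ε i, (√(f₀ y * f₁ y) - f₀ y) =
      ∑ y ∈ Icc 1 k, (√(f₀ y * f₁ y) - f₀ y) := by
    refine sum_subset (block_subset_Icc hsupp i.2) fun y _ hy => ?_
    have : f₁ y = f₀ y := by
      simp only [f₀, f₁, density_update_of_notMem_block _ _ _ hy]
    rw [this, sqrt_mul_self (density_nonneg hε hε1 hq hhead _ y), sub_self]
  have hf₀ : ∀ y ∈ block ε i, f₀ y = blockDensity ε q i false y := fun y hy =>
    (density_of_mem_block _ i hy).trans (by rw [Function.update_self])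
  have hf₁ : ∀ y ∈ block ε i, f₁ y = blockDensity ε q i true y := fun y hy =>
    (density_of_mem_block _ i hy).trans (by rw [Function.update_self])
  have hsqrt : ∑ y ∈ block ε i, √(f₀ y * f₁ y) =
      halfLen ε i * (height ε q i * √(1 + ε) + height ε q i * √(1 - ε)) := by
    rw [← sum_block_ite]
    exact sum_congr rfl fun y hy => by
      rw [hf₀ y hy, hf₁ y hy, sqrt_blockDensity_false_mul_true hε hε1 hq]
  have hmass : ∑ y ∈ block ε i, f₀ y = 2 * height ε q i * halfLen ε i := by
    rw [← sum_blockDensity i false]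
    exact sum_congr rfl hf₀
  rw [sum_sub_distrib, sum_sub_distrib, sum_density hsupp, hsqrt, hmass] at hout
  linarith

theorem exists_le_sum_prod_mul_TVk (n : ℕ) (hε : 0 ≤ ε) (hε1 : ε < 1) (hq : 0 ≤ q)
    (hhead : 0 ≤ headMass ε q m) (hsupp : blockStart ε m ≤ k + 1)
    (hgap : ∀ j, height ε q j * halfLen ε j * (2 - √(1 + ε) - √(1 - ε)) ≤ 1 / (32 * n))
    (φ : (Fin n → ℕ) → ℕ → ℝ) :
    ∃ τ : Fin m → Bool, m * (3 / 4 * (ε * (q / 4))) / 2 ≤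
      ∑ x ∈ Fintype.piFinset (fun _ : Fin n => Icc 1 k),
        (∏ i, density ε q τ (x i)) * TVk k (φ x) (density ε q τ) := by
  have hnonneg := density_nonneg hε hε1 hq hhead
  exact exists_le_sum_mul_loss (Fintype.piFinset fun _ : Fin n => Icc 1 k)
    (fun τ x => ∏ i, density ε q τ (x i)) (fun τ x => TVk k (φ x) (density ε q τ))
    (fun j b x => blockTV ε q j b (φ x)) (by positivity)
    (fun τ x => prod_nonneg fun i _ => hnonneg τ _) (fun j b x => blockTV_nonneg j b _)
    (fun τ x => sum_blockTV_le_TVk hsupp τ (φ x))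
    (fun j x => by
      have := quarter_le_height_mul_halfLen hε hε1 hq j
      have := height_mul_halfLen_mul_le_blockTV_add hε hε1 hq j (φ x)
      nlinarith)
    (fun τ i => three_quarters_le_sum_min_piFinset n (Icc 1 k) (hnonneg _) (hnonneg _)
      (sum_density hsupp _) (sum_density hsupp _) (by
        rw [sum_sqrt_density_update_mul hε hε1 hq hhead hsupp]
        linarith [hgap i]))

end Density

theorem ratio_le_exp (hε : 0 ≤ ε) (hε3 : ε ≤ 1 / 3) : ratio ε ≤ exp (3 * ε) := by
  calc ratio ε ≤ 1 + 3 * ε := by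
        rw [ratio, div_le_iff₀ (by linarith)]
        nlinarith
    _ ≤ exp (3 * ε) := by linarith [add_one_le_exp (3 * ε)]

theorem sum_two_mul_height_mul_halfLen_le (hε : 0 < ε) (hε1 : ε < 1) (hq : 0 ≤ q) (m : ℕ) :
    ∑ j ∈ range m, 2 * height ε q j * halfLen ε j ≤ q / 2 * (m + (1 + ε) / (2 * ε)) := by
  have hr := ratio_pos hε.le hε1
  have hinv : (ratio ε)⁻¹ = (1 - ε) / (1 + ε) := by rw [ratio, inv_div]
  have hgeom : ∑ j ∈ range m, (ratio ε)⁻¹ ^ j ≤ (1 + ε) / (2 * ε) := by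
    have h := geom_sum_Ico_le_of_lt_one (m := 0) (n := m) (inv_nonneg.mpr hr.le)
      (inv_lt_one_of_one_lt₀ (by rw [ratio, one_lt_div (by linarith)]; linarith))
    rw [← range_eq_Ico, pow_zero] at h
    refine h.trans_eq ?_
    rw [hinv, one_sub_div (by linarith), one_div_div]
    ring_nf
  calc ∑ j ∈ range m, 2 * height ε q j * halfLen ε j
      ≤ ∑ j ∈ range m, q / 2 * (1 + (ratio ε)⁻¹ ^ j) :=
        sum_le_sum fun j _ => by nlinarith [height_mul_halfLen_le hε.le hε1 hq j]
    _ = q / 2 * (m + ∑ j ∈ range m, (ratio ε)⁻¹ ^ j) := by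
        rw [← mul_sum, sum_add_distrib, sum_const, card_range, nsmul_one]
    _ ≤ _ := by gcongr

theorem blockStart_le (hε : 0 < ε) (hε1 : ε < 1) (m : ℕ) :
    (blockStart ε m : ℝ) ≤ 2 + 2 * m + ratio ε ^ m / ε := by
  have hr := ratio_pos hε.le hε1
  have hr1 : 2 * ε ≤ ratio ε - 1 := by
    rw [ratio, div_sub_one (by linarith), le_div_iff₀ (by linarith)]
    nlinarith
  have hgeom : ∑ j ∈ range m, ratio ε ^ j ≤ ratio ε ^ m / (2 * ε) := by
    rw [geom_sum_eq (by linarith), div_le_div_iff₀ (by linarith) (by linarith)]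
    nlinarith [pow_pos hr m]
  have hhalf : ∑ j ∈ range m, (halfLen ε j : ℝ) ≤ ∑ j ∈ range m, (ratio ε ^ j + 1) :=
    sum_le_sum fun j _ => (Nat.ceil_lt_add_one (pow_pos hr j).le).le
  rw [sum_add_distrib, sum_const, card_range, nsmul_one] at hhalf
  have htwo : 2 * (ratio ε ^ m / (2 * ε)) = ratio ε ^ m / ε := by field_simp
  rw [blockStart_eq]
  push_cast
  linarith

end Staircase

theorem two_sub_sqrt_one_add_sub_sqrt_one_sub_le {ε : ℝ} (hε : 0 ≤ ε) (hε3 : ε ≤ 1 / 3) :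
    2 - √(1 + ε) - √(1 - ε) ≤ 3 / 8 * ε ^ 2 := by
  have h_add : 1 + ε / 2 - ε ^ 2 / 8 ≤ √(1 + ε) :=
    (le_sqrt (by nlinarith) (by linarith)).mpr (by nlinarith [pow_nonneg hε 3])
  have h_sub : 1 - ε / 2 - ε ^ 2 / 4 ≤ √(1 - ε) :=
    (le_sqrt (by nlinarith) (by linarith)).mpr (by nlinarith [pow_nonneg hε 3, pow_nonneg hε 4])
  linarith

theorem two_add_mul_add_exp_le_exp {L : ℝ} (hL : 8 ≤ L) :
    2 + 4 / 3 * L + 3 / 2 * exp (2 / 3 * L + 1) ≤ exp L := by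
  have hsplit : exp L = exp (2 / 3 * L + 1) * exp (L / 3 - 1) := by rw [← exp_add]; ring_nf
  have h4 : 4 ≤ exp (L / 3 - 1) := by
    nlinarith [quadratic_le_exp_of_nonneg (x := L / 3 - 1) (by linarith)]
  have hE : 2 / 3 * L + 2 ≤ exp (2 / 3 * L + 1) := by linarith [add_one_le_exp (2 / 3 * L + 1)]
  nlinarith [exp_pos (2 / 3 * L + 1)]

theorem rpow_one_div_three_pow_three {x : ℝ} (hx : 0 ≤ x) : (x ^ ((1 : ℝ) / 3)) ^ 3 = x := by
  rw [← rpow_natCast, ← rpow_mul hx]; norm_num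

section Parameters

-- For `A = n^{1/3}` and `u = L^{1/3}` these are `ε = (L / n)^{1/3} / 3` and `6 n ε²`.
noncomputable def tilt (A u : ℝ) : ℝ := u / (3 * A)

noncomputable def blockScale (A u : ℝ) : ℝ := 2 / 3 * A * u ^ 2

open Staircase

variable {A u : ℝ}

theorem tilt_pos (hu : 2 ≤ u) (huA : u ≤ A) : 0 < tilt A u :=
  div_pos (by linarith) (by linarith)

theorem tilt_le_third (hu : 2 ≤ u) (huA : u ≤ A) : tilt A u ≤ 1 / 3 := by
  rw [tilt, div_le_iff₀ (by linarith)]; linarith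

theorem blockScale_ge (hu : 2 ≤ u) (huA : u ≤ A) : 16 / 3 ≤ blockScale A u := by
  rw [blockScale]; nlinarith

theorem inv_blockScale_eq (hu : 2 ≤ u) (huA : u ≤ A) :
    (blockScale A u)⁻¹ = 9 / (2 * u ^ 3) * tilt A u := by
  have : A ≠ 0 := by linarith
  have : u ≠ 0 := by linarith
  rw [blockScale, tilt]; field_simp; ring

theorem height_zero_mul_le_headMass (hu : 2 ≤ u) (huA : u ≤ A) :
    height (tilt A u) (blockScale A u)⁻¹ 0 * (1 + tilt A u) ≤
      headMass (tilt A u) (blockScale A u)⁻¹ ⌈blockScale A u⌉₊ := by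
  set ε := tilt A u
  set N := blockScale A u
  have hε := tilt_pos hu huA
  have hε3 := tilt_le_third hu huA
  have hN := blockScale_ge hu huA
  have hqN : N⁻¹ * N = 1 := inv_mul_cancel₀ (by linarith)
  have hqε : N⁻¹ ≤ 9 / 16 * ε := by
    rw [inv_blockScale_eq hu huA]
    gcongr
    nlinarith [pow_le_pow_left₀ (by norm_num) hu 3]
  have hm : (⌈N⌉₊ : ℝ) ≤ N + 1 := (Nat.ceil_lt_add_one (by linarith)).le
  have hq0 : 0 ≤ N⁻¹ := inv_nonneg.mpr (by linarith)
  have hsum := sum_two_mul_height_mul_halfLen_le hε (by linarith) hq0 ⌈N⌉₊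
  have hsplit : N⁻¹ / 2 * (⌈N⌉₊ + (1 + ε) / (2 * ε)) =
      N⁻¹ * ⌈N⌉₊ / 2 + N⁻¹ / ε * (1 + ε) / 4 := by
    field_simp
    ring
  have hqε' : N⁻¹ / ε ≤ 9 / 16 := by rwa [div_le_iff₀ hε]
  rw [headMass, height, pow_zero, div_one]
  nlinarith [mul_le_mul_of_nonneg_left hm hq0,
    mul_le_mul_of_nonneg_right hqε' (by linarith : 0 ≤ 1 + ε)]

theorem blockStart_le_mul_exp (hu : 2 ≤ u) (huA : u ≤ A) :
    (blockStart (tilt A u) ⌈blockScale A u⌉₊ : ℝ) ≤ A * exp (u ^ 3) := by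
  set ε := tilt A u
  set N := blockScale A u
  set m := ⌈N⌉₊
  have hε := tilt_pos hu huA
  have hε3 := tilt_le_third hu huA
  have hm : (m : ℝ) ≤ N + 1 := (Nat.ceil_lt_add_one (by linarith [blockScale_ge hu huA])).le
  have hεN : 3 * ε * N = 2 / 3 * u ^ 3 := by
    have : A ≠ 0 := by linarith
    simp only [ε, N, tilt, blockScale]; field_simp
  have hpow : ratio ε ^ m ≤ exp (2 / 3 * u ^ 3 + 1) :=
    calc ratio ε ^ m ≤ exp (3 * ε) ^ m :=
          pow_le_pow_left₀ (ratio_pos hε.le (by linarith)).le (ratio_le_exp hε.le hε3) m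
      _ = exp (3 * ε * m) := by rw [← exp_nat_mul]; ring_nf
      _ ≤ exp (2 / 3 * u ^ 3 + 1) := exp_le_exp.mpr (by nlinarith)
  have hinv : 1 / ε ≤ 3 / 2 * A := by
    show 1 / tilt A u ≤ _
    rw [tilt, one_div_div, div_le_iff₀ (by linarith)]
    nlinarith
  have hdiv : ratio ε ^ m / ε ≤ exp (2 / 3 * u ^ 3 + 1) * (3 / 2 * A) := by
    rw [div_eq_mul_one_div]
    exact mul_le_mul hpow hinv (by positivity) (exp_pos _).le
  have hkey := two_add_mul_add_exp_le_exp (L := u ^ 3)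
    (by nlinarith [pow_le_pow_left₀ (by norm_num) hu 3])
  have hu23 : A * u ^ 2 ≤ A * u ^ 3 := mul_le_mul_of_nonneg_left
    (pow_le_pow_right₀ (by linarith) (by norm_num)) (by linarith)
  have hN : N = 2 / 3 * (A * u ^ 2) := by simp only [N, blockScale]; ring
  nlinarith [blockStart_le hε (by linarith) m, mul_le_mul_of_nonneg_left hkey (by linarith : 0 ≤ A)]

theorem height_mul_halfLen_mul_two_sub_sqrt_le (hu : 2 ≤ u) (huA : u ≤ A) (j : ℕ) :
    height (tilt A u) (blockScale A u)⁻¹ j * halfLen (tilt A u) j *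
      (2 - √(1 + tilt A u) - √(1 - tilt A u)) ≤ 1 / (32 * A ^ 3) := by
  set ε := tilt A u
  set N := blockScale A u
  have hε := tilt_pos hu huA
  have hε3 := tilt_le_third hu huA
  have hq0 : 0 ≤ N⁻¹ := inv_nonneg.mpr (by linarith [blockScale_ge hu huA])
  have hgap : 0 ≤ 2 - √(1 + ε) - √(1 - ε) := by
    have := sqrt_one_add_le (by linarith : -1 ≤ -ε)
    rw [← sub_eq_add_neg] at this
    linarith [sqrt_one_add_le (by linarith : -1 ≤ ε)]
  have hval : N⁻¹ / 2 * (3 / 8 * ε ^ 2) = 1 / (32 * A ^ 3) := by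
    have : A ≠ 0 := by linarith
    have : u ≠ 0 := by linarith
    simp only [ε, N, tilt, blockScale]
    field_simp
    ring
  calc _ ≤ N⁻¹ / 2 * (3 / 8 * ε ^ 2) :=
        mul_le_mul (height_mul_halfLen_le_half hε.le (by linarith) hq0 j)
          (two_sub_sqrt_one_add_sub_sqrt_one_sub_le hε.le hε3) hgap (by positivity)
    _ = _ := hval

end Parameters

theorem sum_prod_mul_TVk_le_risk (n k : ℕ) (φ : (Fin n → ℕ) → ℕ → ℝ) {f : ℕ → ℝ}
    (hf : f ∈ Fk k) :
    ∑ x ∈ Fintype.piFinset (fun _ : Fin n => Icc 1 k), (∏ i, f (x i)) * TVk k (φ x) f ≤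
      risk n k φ (Fk k) := by
  refine le_ciSup₂ (f := fun g (_ : g ∈ Fk k) => ∑ x ∈ Fintype.piFinset (fun _ : Fin n => Icc 1 k),
    (∏ i, g (x i)) * TVk k (φ x) g)
    ⟨∑ x ∈ Fintype.piFinset (fun _ : Fin n => Icc 1 k), (∑ y ∈ Icc 1 k, |φ x y| + 1) / 2, ?_⟩ f hf
  intro r hr
  simp only [Set.mem_iUnion, Set.mem_range] at hr
  obtain ⟨g, ⟨hg0, hgout, hg1, -⟩, rfl⟩ := hr
  have hg_le (y : ℕ) : g y ≤ 1 := by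
    by_cases hy : y ∈ Icc 1 k
    · exact hg1 ▸ single_le_sum (fun z _ => hg0 z) hy
    · rw [hgout y hy]; exact zero_le_one
  refine sum_le_sum fun x _ => ?_
  have hTV : TVk k (φ x) g ≤ (∑ y ∈ Icc 1 k, |φ x y| + 1) / 2 := by
    rw [TVk, ← hg1, ← sum_add_distrib]
    gcongr with y
    exact (abs_sub _ _).trans_eq (by rw [abs_of_nonneg (hg0 y)])
  have hTV0 : 0 ≤ TVk k (φ x) g := div_nonneg (sum_nonneg fun _ _ => abs_nonneg _) zero_le_two
  calc (∏ i, g (x i)) * TVk k (φ x) g ≤ 1 * TVk k (φ x) g :=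
        mul_le_mul_of_nonneg_right (prod_le_one (fun i _ => hg0 _) fun i _ => hg_le _) hTV0
    _ ≤ _ := by rwa [one_mul]

open Staircase in
theorem le_risk_of_mul_exp_le (n k : ℕ) {A u : ℝ} (hu : 2 ≤ u) (huA : u ≤ A)
    (hn : (n : ℝ) = A ^ 3) (hk : A * exp (u ^ 3) ≤ k) (φ : (Fin n → ℕ) → ℕ → ℝ) :
    u / (32 * A) ≤ risk n k φ (Fk k) := by
  set ε := tilt A u
  set N := blockScale A u
  have hε := tilt_pos hu huA
  have hε1 : ε < 1 := by linarith [tilt_le_third hu huA]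
  have hq : 0 < N⁻¹ := inv_pos.mpr (by linarith [blockScale_ge hu huA])
  have hhead := height_zero_mul_le_headMass hu huA
  have hhead0 := headMass_nonneg hε.le hε1 hq.le hhead
  have hsupp : blockStart ε ⌈N⌉₊ ≤ k + 1 := by
    have : blockStart ε ⌈N⌉₊ ≤ k := by exact_mod_cast (blockStart_le_mul_exp hu huA).trans hk
    omega
  obtain ⟨τ, hτ⟩ := exists_le_sum_prod_mul_TVk n hε.le hε1 hq.le hhead0 hsupp
    (fun j => hn ▸ height_mul_halfLen_mul_two_sub_sqrt_le hu huA j) φ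
  have hmq : 1 ≤ (⌈N⌉₊ : ℝ) * N⁻¹ := by
    rw [← div_eq_mul_inv, le_div_iff₀ (inv_pos.mp hq), one_mul]
    exact Nat.le_ceil N
  calc u / (32 * A) = 3 / 32 * ε := by
        have : A ≠ 0 := by linarith
        simp only [ε, tilt]
        field_simp
    _ ≤ ⌈N⌉₊ * (3 / 4 * (ε * (N⁻¹ / 4))) / 2 := by nlinarith
    _ ≤ _ := hτ
    _ ≤ _ := sum_prod_mul_TVk_le_risk n k φ (density_mem_Fk hε.le hε1 hq.le hhead hsupp τ)

theorem stmt18_general (n k : ℕ) (hn : 1 ≤ n)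
    (hk1 : Real.exp 8 * (n : ℝ) ^ ((1 : ℝ) / 3) ≤ (k : ℝ))
    (hk2 : (k : ℝ) ≤ (n : ℝ) ^ ((1 : ℝ) / 3) * Real.exp n) :
    (1 / 32) * (Real.log ((k : ℝ) / (n : ℝ) ^ ((1 : ℝ) / 3)) / n) ^ ((1 : ℝ) / 3) ≤
      minimaxRisk n k (Fk k) := by
  set A := (n : ℝ) ^ ((1 : ℝ) / 3)
  set L := log (k / A)
  have hA : 0 < A := rpow_pos_of_pos (by exact_mod_cast hn) _
  have hkA : exp 8 ≤ k / A := (le_div_iff₀ hA).mpr hk1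
  have hkA0 : 0 < k / A := (exp_pos 8).trans_le hkA
  have hL8 : 8 ≤ L := (le_log_iff_exp_le hkA0).mpr hkA
  have hLn : L ≤ n := (log_le_iff_le_exp hkA0).mpr ((div_le_iff₀' hA).mpr hk2)
  have hA3 : A ^ 3 = n := rpow_one_div_three_pow_three (Nat.cast_nonneg n)
  have hu3 : (L ^ ((1 : ℝ) / 3)) ^ 3 = L := rpow_one_div_three_pow_three (by linarith)
  have hu : 2 ≤ L ^ ((1 : ℝ) / 3) :=
    le_of_pow_le_pow_left₀ three_ne_zero (by positivity) (by rw [hu3]; linarith)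
  have huA : L ^ ((1 : ℝ) / 3) ≤ A :=
    le_of_pow_le_pow_left₀ three_ne_zero hA.le (by rw [hu3, hA3]; exact hLn)
  have hk : A * exp ((L ^ ((1 : ℝ) / 3)) ^ 3) ≤ k := by
    rw [hu3, exp_log hkA0, mul_div_cancel₀ _ hA.ne']
  rw [div_rpow (by linarith) (Nat.cast_nonneg n)]
  calc 1 / 32 * (L ^ ((1 : ℝ) / 3) / A) = L ^ ((1 : ℝ) / 3) / (32 * A) := by ring
    _ ≤ _ := le_ciInf fun φ => le_risk_of_mul_exp_le n k hu huA hA3.symm hk φ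

/-- **Lower bound in Theorem 2.1, large-`k` regime**: if `n` and `k` are positive
integers with `e^8 n^{1/3} ≤ k ≤ n^{1/3} e^n`, then
`R_n(F_k) ≥ (1/32) (log(k / n^{1/3}) / n)^{1/3}`, where `log` is the natural
logarithm. -/
theorem stmt18 (n k : ℕ) (hn : 1 ≤ n) (hk : 1 ≤ k)
    (hk1 : Real.exp 8 * (n : ℝ) ^ ((1 : ℝ) / 3) ≤ (k : ℝ))
    (hk2 : (k : ℝ) ≤ (n : ℝ) ^ ((1 : ℝ) / 3) * Real.exp n) :
    (1 / 32) * (Real.log ((k : ℝ) / (n : ℝ) ^ ((1 : ℝ) / 3)) / n) ^ ((1 : ℝ) / 3) ≤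
      minimaxRisk n k (Fk k) :=
  stmt18_general n k hn hk1 hk2
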